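/- If (S,R) is a complete complemented semigroup presentation (at most one relation s·v' = t·v for each pair of distinct generators s, t, and none of the form s… = s…), then any two elements of the presented monoid that admit a common right-multiple admit a least common right-multiple. -/

import Mathlib

/-- A congruence on the free monoid of words over `S`: an equivalence relation
compatible with concatenation. -/
def IsCong {S : Type} (r : List S → List S → Prop) : Prop :=
  Equivalence r ∧ ∀ a b c d : List S, r a b → r c d → r (a ++ c) (b ++ d)

/-- `R`-equivalence: the smallest congruence on the free monoid `S*`
containing the relations `R`. -/
def REquiv {S : Type} (R : List S → List S → Prop) (w w' : List S) : Prop :=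
  ∀ r : List S → List S → Prop, IsCong r → (∀ a b, R a b → r a b) → r w w'

/-- The positive word `w` viewed as a signed word. -/
def wpos {S : Type} (w : List S) : List (S ⊕ S) := w.map Sum.inl

/-- The formal inverse `w⁻¹` of a positive word `w`, as a signed word. -/
def wneg {S : Type} (w : List S) : List (S ⊕ S) := (w.map Sum.inr).reverse

/-- One step of right-reversing with respect to `R`: replace a subword `s⁻¹t`
by `v'·v⁻¹` where `s·v' = t·v` is a relation of `R` (in either orientation),
including the trivial step `s⁻¹s ↷ ε`. -/
def RevStep {S : Type} (R : List S → List S → Prop) (x y : List (S ⊕ S)) : Prop :=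
  ∃ (u u' : List (S ⊕ S)) (s t : S) (v v' : List S),
    x = u ++ [Sum.inr s, Sum.inl t] ++ u' ∧
    y = u ++ wpos v' ++ wneg v ++ u' ∧
    (R (s :: v') (t :: v) ∨ R (t :: v) (s :: v') ∨ (s = t ∧ v = [] ∧ v' = []))

/-- Right-reversing: finitely many reversing steps. -/
def Rev {S : Type} (R : List S → List S → Prop) :
    List (S ⊕ S) → List (S ⊕ S) → Prop :=
  Relation.ReflTransGen (RevStep R)

/-- Completeness of a presentation with respect to right-reversing. -/
def Complete {S : Type} (R : List S → List S → Prop) : Prop :=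
  ∀ w w' : List S, REquiv R w w' → Rev R (wneg w ++ wpos w') []


/-- A presentation is (right)-complemented if there is no relation of the form
`s… = s…` and, for distinct generators `s`, `t`, at most one relation
`s… = t…`. -/
def Complemented {S : Type} (R : List S → List S → Prop) : Prop :=
  (∀ (s : S) (v v' : List S), ¬ R (s :: v) (s :: v')) ∧
  (∀ (s t : S), s ≠ t → ∀ v v' w w' : List S,
    (R (s :: v') (t :: v) ∨ R (t :: v) (s :: v')) →
    (R (s :: w') (t :: w) ∨ R (t :: w) (s :: w')) → v' = w' ∧ v = w)

namespace Stmt6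
variable {S : Type} {R : List S → List S → Prop}

theorem requiv_refl (a : List S) : REquiv R a a := fun r hr _ => hr.1.refl a
theorem requiv_symm {a b : List S} (h : REquiv R a b) : REquiv R b a :=
  fun r hr hR => hr.1.symm (h r hr hR)
theorem requiv_trans {a b c : List S} (h1 : REquiv R a b) (h2 : REquiv R b c) : REquiv R a c :=
  fun r hr hR => hr.1.trans (h1 r hr hR) (h2 r hr hR)
theorem requiv_append {a b c d : List S} (h1 : REquiv R a b) (h2 : REquiv R c d) :
    REquiv R (a ++ c) (b ++ d) :=
  fun r hr hR => hr.2 a b c d (h1 r hr hR) (h2 r hr hR)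
theorem requiv_of_R {a b : List S} (h : R a b) : REquiv R a b := fun _ _ hR => hR a b h

/-- Interpretation of a signed word as a relation on positive words. -/
def V (R : List S → List S → Prop) : List (S ⊕ S) → List S → List S → Prop
  | [], a, b => REquiv R a b
  | (Sum.inl s) :: x, a, b => V R x (a ++ [s]) b
  | (Sum.inr s) :: x, a, b => ∃ a', REquiv R a (a' ++ [s]) ∧ V R x a' b

theorem V_invL : ∀ (x : List (S ⊕ S)) {a a' b : List S},
    REquiv R a a' → V R x a' b → V R x a b
  | [], a, a', b, h, hv => requiv_trans h hv
  | (Sum.inl s) :: x, a, a', b, h, hv =>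
    V_invL x (requiv_append h (requiv_refl [s])) hv
  | (Sum.inr s) :: x, a, a', b, h, hv => by
    obtain ⟨c, hc, hv⟩ := hv
    exact ⟨c, requiv_trans h hc, hv⟩

theorem V_append : ∀ (x : List (S ⊕ S)) {y : List (S ⊕ S)} {a c b : List S},
    V R x a c → V R y c b → V R (x ++ y) a b
  | [], y, a, c, b, h1, h2 => V_invL y h1 h2
  | (Sum.inl s) :: x, y, a, c, b, h1, h2 => V_append x h1 h2
  | (Sum.inr s) :: x, y, a, c, b, h1, h2 => by
    obtain ⟨a', ha, hv⟩ := h1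
    exact ⟨a', ha, V_append x hv h2⟩

theorem V_append_elim : ∀ (x : List (S ⊕ S)) {y : List (S ⊕ S)} {a b : List S},
    V R (x ++ y) a b → ∃ c, V R x a c ∧ V R y c b
  | [], y, a, b, h => ⟨a, requiv_refl a, h⟩
  | (Sum.inl s) :: x, y, a, b, h => V_append_elim x h
  | (Sum.inr s) :: x, y, a, b, h => by
    obtain ⟨a', ha, hv⟩ := h
    obtain ⟨c, h1, h2⟩ := V_append_elim x hv
    exact ⟨c, ⟨a', ha, h1⟩, h2⟩

theorem V_wpos : ∀ (v : List S) (a : List S), V R (wpos v) a (a ++ v)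
  | [], a => by simpa [wpos, V] using requiv_refl a
  | s :: v, a => by
    show V R (Sum.inl s :: wpos v) a (a ++ s :: v)
    show V R (wpos v) (a ++ [s]) (a ++ s :: v)
    have := V_wpos v (a ++ [s])
    simpa using this

theorem wneg_cons (s : S) (v : List S) : wneg (s :: v) = wneg v ++ [Sum.inr s] := by
  simp [wneg]

theorem wneg_append (u v : List S) : wneg (u ++ v) = wneg v ++ wneg u := by
  simp [wneg]

theorem wpos_append (u v : List S) : wpos (u ++ v) = wpos u ++ wpos v := by
  simp [wpos]

theorem V_wneg : ∀ (v : List S) (a : List S), V R (wneg v) (a ++ v) a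
  | [], a => by simpa [wneg, V] using requiv_refl a
  | s :: v, a => by
    rw [wneg_cons]
    have h1 : V R (wneg v) ((a ++ [s]) ++ v) (a ++ [s]) := V_wneg v (a ++ [s])
    have h2 : V R [Sum.inr s] (a ++ [s]) a := ⟨a, requiv_refl _, requiv_refl a⟩
    have := V_append (R := R) (wneg v) h1 h2
    simpa using this

theorem V_wpos_elim : ∀ (v : List S) {a b : List S}, V R (wpos v) a b → REquiv R (a ++ v) b
  | [], a, b, h => by simpa [wpos, V] using h
  | s :: v, a, b, h => by
    have := V_wpos_elim v (a := a ++ [s]) h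
    simpa using this

theorem V_wneg_elim : ∀ (v : List S) {a b : List S}, V R (wneg v) a b → REquiv R a (b ++ v)
  | [], a, b, h => by simpa [wneg, V] using h
  | s :: v, a, b, h => by
    rw [wneg_cons] at h
    obtain ⟨c, h1, h2⟩ := V_append_elim (R := R) (wneg v) h
    obtain ⟨b0, hb0, hbb⟩ := h2
    have ih := V_wneg_elim v h1
    have : REquiv R a ((b ++ [s]) ++ v) :=
      requiv_trans ih (requiv_append
        (requiv_trans hb0 (requiv_append hbb (requiv_refl [s]))) (requiv_refl v))
    simpa using this

theorem V_mono : ∀ (u : List (S ⊕ S)) {x1 x2 : List (S ⊕ S)} {b : List S}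
    (_ : ∀ c, V R x1 c b → V R x2 c b) {a : List S},
    V R (u ++ x1) a b → V R (u ++ x2) a b
  | [], x1, x2, b, h, a, hv => h a hv
  | Sum.inl s :: u, x1, x2, b, h, a, hv => V_mono u h hv
  | Sum.inr s :: u, x1, x2, b, h, a, hv => by
    obtain ⟨a', ha, hv⟩ := hv
    exact ⟨a', ha, V_mono u h hv⟩

theorem V_step {x y : List (S ⊕ S)} (hs : RevStep R x y) {a b : List S}
    (h : V R x a b) : V R y a b := by
  obtain ⟨u, u', s, t, v, v', hx, hy, hrel⟩ := hs
  subst hx hy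
  have hsv : REquiv R (s :: v') (t :: v) := by
    rcases hrel with h' | h' | ⟨rfl, rfl, rfl⟩
    · exact requiv_of_R h'
    · exact requiv_symm (requiv_of_R h')
    · exact requiv_refl _
  rw [show u ++ wpos v' ++ wneg v ++ u' = u ++ (wpos v' ++ (wneg v ++ u')) by
    simp [List.append_assoc]]
  rw [show u ++ [Sum.inr s, Sum.inl t] ++ u' = u ++ ([Sum.inr s, Sum.inl t] ++ u') by
    simp [List.append_assoc]] at h
  refine V_mono u (fun c hc => ?_) h
  obtain ⟨c', hc', hu'⟩ := hc
  refine V_append (R := R) (wpos v') (V_wpos v' c) (V_append (R := R) (wneg v) ?_ hu')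
  refine V_invL (wneg v) ?_ (V_wneg v (c' ++ [t]))
  have h1 : REquiv R (c ++ v') ((c' ++ [s]) ++ v') := requiv_append hc' (requiv_refl v')
  have h2 : REquiv R (c' ++ (s :: v')) (c' ++ (t :: v)) := requiv_append (requiv_refl c') hsv
  have e1 : (c' ++ [s]) ++ v' = c' ++ (s :: v') := by simp
  have e2 : (c' ++ [t]) ++ v = c' ++ (t :: v) := by simp
  rw [e1] at h1; rw [e2]
  exact requiv_trans h1 h2

theorem V_rev {x y : List (S ⊕ S)} (h : Rev R x y) {a b : List S}
    (hv : V R x a b) : V R y a b := by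
  induction h with
  | refl => exact hv
  | tail _ hstep ih => exact V_step hstep ih

theorem split_helper {α : Type} : ∀ (u1 u2 : List α) {u1' u2' : List α} {x1 y1 x2 y2 : α},
    u1 ++ [x1, y1] ++ u1' = u2 ++ [x2, y2] ++ u2' → u1.length < u2.length →
    y1 = x2 ∨ ∃ m, u2 = u1 ++ [x1, y1] ++ m ∧ u1' = m ++ [x2, y2] ++ u2'
  | [], [], _, _, _, _, _, _, _, hl => absurd hl (by simp)
  | [], z :: u2r, u1', u2', x1, y1, x2, y2, h, _ => by
    simp only [List.append_assoc, List.cons_append, List.nil_append, List.cons.injEq] at h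
    obtain ⟨rfl, h⟩ := h
    cases u2r with
    | nil =>
      simp only [List.append_assoc, List.cons_append, List.nil_append, List.cons.injEq] at h
      exact Or.inl h.1
    | cons z2 u2rr =>
      simp only [List.append_assoc, List.cons_append, List.cons.injEq] at h
      obtain ⟨rfl, h⟩ := h
      exact Or.inr ⟨u2rr, by simp, by simpa using h⟩
  | _ :: _, [], _, _, _, _, _, _, _, hl => absurd hl (by simp)
  | a :: u1r, b :: u2r, u1', u2', x1, y1, x2, y2, h, hl => by
    have h' : a = b ∧ u1r ++ [x1, y1] ++ u1' = u2r ++ [x2, y2] ++ u2' := by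
      constructor
      · have := congrArg (List.head? ·) h; simpa using this
      · have := congrArg (List.tail ·) h; simpa using this
    obtain ⟨rfl, h'⟩ := h'
    rcases split_helper u1r u2r h' (by simpa using hl) with hy | ⟨m, hm1, hm2⟩
    · exact Or.inl hy
    · exact Or.inr ⟨m, by simp [hm1], hm2⟩

theorem same_pos {α : Type} {u1 u2 u1' u2' : List α} {x1 y1 x2 y2 : α}
    (h : u1 ++ [x1, y1] ++ u1' = u2 ++ [x2, y2] ++ u2') (hl : u1.length = u2.length) :
    u1 = u2 ∧ x1 = x2 ∧ y1 = y2 ∧ u1' = u2' := by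
  rw [List.append_assoc, List.append_assoc] at h
  obtain ⟨h1, h2⟩ := List.append_inj h hl
  simp only [List.cons_append, List.nil_append, List.cons.injEq] at h2
  exact ⟨h1, h2.1, h2.2.1, h2.2.2⟩

theorem diamond (hcompl : Complemented R) {a b c : List (S ⊕ S)}
    (h1 : RevStep R a b) (h2 : RevStep R a c) :
    b = c ∨ ∃ d, RevStep R b d ∧ RevStep R c d := by
  obtain ⟨u1, u1', s1, t1, v1, v1', hx1, hy1, hr1⟩ := h1
  obtain ⟨u2, u2', s2, t2, v2, v2', hx2, hy2, hr2⟩ := h2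
  have heq : u1 ++ [Sum.inr s1, Sum.inl t1] ++ u1' = u2 ++ [Sum.inr s2, Sum.inl t2] ++ u2' :=
    hx1 ▸ hx2
  rcases lt_trichotomy u1.length u2.length with hl | hl | hl
  · rcases split_helper u1 u2 heq hl with hy | ⟨m, hm1, hm2⟩
    · exact absurd hy (by simp)
    · refine Or.inr ⟨u1 ++ wpos v1' ++ wneg v1 ++ (m ++ wpos v2' ++ wneg v2 ++ u2'), ?_, ?_⟩
      · refine ⟨u1 ++ wpos v1' ++ wneg v1 ++ m, u2', s2, t2, v2, v2', ?_, ?_, hr2⟩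
        · rw [hy1, hm2]; simp [List.append_assoc]
        · simp [List.append_assoc]
      · refine ⟨u1, m ++ wpos v2' ++ wneg v2 ++ u2', s1, t1, v1, v1', ?_, ?_, hr1⟩
        · rw [hy2, hm1]; simp [List.append_assoc]
        · simp [List.append_assoc]
  · obtain ⟨rfl, hs, ht, rfl⟩ := same_pos heq hl
    obtain rfl : s1 = s2 := by simpa using hs
    obtain rfl : t1 = t2 := by simpa using ht
    left
    by_cases hst : s1 = t1
    · subst hst
      have e1 : v1 = [] ∧ v1' = [] := by
        rcases hr1 with h' | h' | ⟨_, h1, h2⟩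
        · exact absurd h' (hcompl.1 _ _ _)
        · exact absurd h' (hcompl.1 _ _ _)
        · exact ⟨h1, h2⟩
      have e2 : v2 = [] ∧ v2' = [] := by
        rcases hr2 with h' | h' | ⟨_, h1, h2⟩
        · exact absurd h' (hcompl.1 _ _ _)
        · exact absurd h' (hcompl.1 _ _ _)
        · exact ⟨h1, h2⟩
      rw [hy1, hy2, e1.1, e1.2, e2.1, e2.2]
    · have hr1' : R (s1 :: v1') (t1 :: v1) ∨ R (t1 :: v1) (s1 :: v1') := by
        rcases hr1 with h' | h' | ⟨h', _⟩
        · exact Or.inl h'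
        · exact Or.inr h'
        · exact absurd h' hst
      have hr2' : R (s1 :: v2') (t1 :: v2) ∨ R (t1 :: v2) (s1 :: v2') := by
        rcases hr2 with h' | h' | ⟨h', _⟩
        · exact Or.inl h'
        · exact Or.inr h'
        · exact absurd h' hst
      obtain ⟨e1, e2⟩ := hcompl.2 s1 t1 hst v1 v1' v2 v2' hr1' hr2'
      rw [hy1, hy2, e1, e2]
  · rcases split_helper u2 u1 heq.symm hl with hy | ⟨m, hm1, hm2⟩
    · exact absurd hy (by simp)
    · refine Or.inr ⟨u2 ++ wpos v2' ++ wneg v2 ++ (m ++ wpos v1' ++ wneg v1 ++ u1'), ?_, ?_⟩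
      · refine ⟨u2, m ++ wpos v1' ++ wneg v1 ++ u1', s2, t2, v2, v2', ?_, ?_, hr2⟩
        · rw [hy1, hm1]; simp [List.append_assoc]
        · simp [List.append_assoc]
      · refine ⟨u2 ++ wpos v2' ++ wneg v2 ++ m, u1', s1, t1, v1, v1', ?_, ?_, hr1⟩
        · rw [hy2, hm2]; simp [List.append_assoc]
        · simp [List.append_assoc]

inductive StepsN (R : List S → List S → Prop) : ℕ → List (S ⊕ S) → List (S ⊕ S) → Prop
  | zero (a) : StepsN R 0 a a
  | succ {n a b c} : RevStep R a b → StepsN R n b c → StepsN R (n + 1) a c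

theorem stepsN_snoc {n : ℕ} {a b c : List (S ⊕ S)} (h : StepsN R n a b)
    (h2 : RevStep R b c) : StepsN R (n + 1) a c := by
  induction h with
  | zero a => exact StepsN.succ h2 (StepsN.zero c)
  | succ hs _ ih => exact StepsN.succ hs (ih h2)

theorem rev_to_stepsN {a b : List (S ⊕ S)} (h : Rev R a b) : ∃ n, StepsN R n a b := by
  induction h with
  | refl => exact ⟨0, StepsN.zero a⟩
  | tail _ hstep ih => obtain ⟨n, hn⟩ := ih; exact ⟨n + 1, stepsN_snoc hn hstep⟩

theorem stepsN_to_rev {n : ℕ} {a b : List (S ⊕ S)} (h : StepsN R n a b) : Rev R a b := by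
  induction h with
  | zero a => exact Relation.ReflTransGen.refl
  | succ hs _ ih => exact Relation.ReflTransGen.head hs ih

def NormalW (R : List S → List S → Prop) (x : List (S ⊕ S)) : Prop := ∀ y, ¬ RevStep R x y

theorem normal_nil : NormalW R [] := by
  rintro y ⟨u, u', s, t, v, v', heq, -, -⟩
  simp at heq

theorem stepA (hcompl : Complemented R) {n : ℕ} {a b : List (S ⊕ S)}
    (h : StepsN R n a b) (hb : NormalW R b) :
    ∀ a1, RevStep R a a1 → ∃ m, m < n ∧ StepsN R m a1 b := by
  induction h with
  | zero a => exact fun a1 h1 => absurd h1 (hb a1)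
  | succ hstep hrest ih =>
    intro a1 h1
    rcases diamond hcompl h1 hstep with rfl | ⟨d, hd1, hd2⟩
    · exact ⟨_, Nat.lt_succ_self _, hrest⟩
    · obtain ⟨m, hm, hsteps⟩ := ih hb d hd2
      exact ⟨m + 1, Nat.succ_lt_succ hm, StepsN.succ hd1 hsteps⟩

theorem stepB (hcompl : Complemented R) :
    ∀ {k a c}, StepsN R k a c → ∀ {n b}, StepsN R n a b → NormalW R b →
      k ≤ n ∧ Rev R c b := by
  intro k a c hk
  induction hk with
  | zero a => exact fun hn _ => ⟨Nat.zero_le _, stepsN_to_rev hn⟩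
  | succ hstep _ ih =>
    intro n b hn hb
    obtain ⟨m, hm, hsteps⟩ := stepA hcompl hn hb _ hstep
    obtain ⟨hk', hrev⟩ := ih hsteps hb
    exact ⟨by omega, hrev⟩

theorem rev_to_nf (hcompl : Complemented R) {a b c : List (S ⊕ S)}
    (hab : Rev R a b) (hb : NormalW R b) (hac : Rev R a c) : Rev R c b := by
  obtain ⟨n, hn⟩ := rev_to_stepsN hab
  obtain ⟨k, hk⟩ := rev_to_stepsN hac
  exact (stepB hcompl hk hn hb).2

theorem exists_nf : ∀ (n : ℕ) (a : List (S ⊕ S)), (∀ k c, StepsN R k a c → k ≤ n) →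
    ∃ b, Rev R a b ∧ NormalW R b := by
  intro n
  induction n with
  | zero =>
    intro a ha
    by_cases h : NormalW R a
    · exact ⟨a, Relation.ReflTransGen.refl, h⟩
    · simp only [NormalW, not_forall, not_not] at h
      obtain ⟨y, hy⟩ := h
      have := ha 1 y (StepsN.succ hy (StepsN.zero y))
      omega
  | succ n ih =>
    intro a ha
    by_cases h : NormalW R a
    · exact ⟨a, Relation.ReflTransGen.refl, h⟩
    · simp only [NormalW, not_forall, not_not] at h
      obtain ⟨y, hy⟩ := h
      obtain ⟨b, hrev, hnf⟩ := ih y (fun k c hk => by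
        have := ha (k + 1) c (StepsN.succ hy hk); omega)
      exact ⟨b, Relation.ReflTransGen.head hy hrev, hnf⟩

theorem revStep_lift {x y : List (S ⊕ S)} (P Q : List (S ⊕ S)) (h : RevStep R x y) :
    RevStep R (P ++ x ++ Q) (P ++ y ++ Q) := by
  obtain ⟨u, u', s, t, v, v', hx, hy, hr⟩ := h
  exact ⟨P ++ u, u' ++ Q, s, t, v, v', by simp [hx, List.append_assoc],
    by simp [hy, List.append_assoc], hr⟩

theorem stepsN_lift {n : ℕ} {x y : List (S ⊕ S)} (P Q : List (S ⊕ S)) (h : StepsN R n x y) :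
    StepsN R n (P ++ x ++ Q) (P ++ y ++ Q) := by
  induction h with
  | zero a => exact StepsN.zero _
  | succ hs _ ih => exact StepsN.succ (revStep_lift P Q hs) ih

theorem rev_lift {x y : List (S ⊕ S)} (P Q : List (S ⊕ S)) (h : Rev R x y) :
    Rev R (P ++ x ++ Q) (P ++ y ++ Q) := by
  induction h with
  | refl => exact Relation.ReflTransGen.refl
  | tail _ hstep ih => exact Relation.ReflTransGen.tail ih (revStep_lift P Q hstep)

def NoRule (R : List S → List S → Prop) (s t : S) : Prop :=
  ∀ v v' : List S,
    ¬ (R (s :: v') (t :: v) ∨ R (t :: v) (s :: v') ∨ (s = t ∧ v = [] ∧ v' = []))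

def Stuck (R : List S → List S → Prop) (x : List (S ⊕ S)) : Prop :=
  ∃ (u u' : List (S ⊕ S)) (s t : S),
    x = u ++ [Sum.inr s, Sum.inl t] ++ u' ∧ NoRule R s t

theorem stuck_step {x y : List (S ⊕ S)} (h : Stuck R x) (hs : RevStep R x y) : Stuck R y := by
  obtain ⟨u1, u1', s1, t1, hx1, hnr⟩ := h
  obtain ⟨u2, u2', s2, t2, v2, v2', hx2, hy2, hr2⟩ := hs
  have heq : u1 ++ [Sum.inr s1, Sum.inl t1] ++ u1' = u2 ++ [Sum.inr s2, Sum.inl t2] ++ u2' :=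
    hx1 ▸ hx2
  rcases lt_trichotomy u1.length u2.length with hl | hl | hl
  · rcases split_helper u1 u2 heq hl with hy | ⟨m, hm1, hm2⟩
    · exact absurd hy (by simp)
    · refine ⟨u1, m ++ wpos v2' ++ wneg v2 ++ u2', s1, t1, ?_, hnr⟩
      rw [hy2, hm1]; simp [List.append_assoc]
  · obtain ⟨rfl, hs', ht', rfl⟩ := same_pos heq hl
    obtain rfl : s1 = s2 := by simpa using hs'
    obtain rfl : t1 = t2 := by simpa using ht'
    exact absurd hr2 (hnr v2 v2')
  · rcases split_helper u2 u1 heq.symm hl with hy | ⟨m, hm1, hm2⟩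
    · exact absurd hy (by simp)
    · refine ⟨u2 ++ wpos v2' ++ wneg v2 ++ m, u1', s1, t1, ?_, hnr⟩
      rw [hy2, hm2]; simp [List.append_assoc]

theorem stuck_not_nil : ∀ {x : List (S ⊕ S)}, Rev R x [] → Stuck R x → False := by
  intro x hrev
  induction hrev using Relation.ReflTransGen.head_induction_on with
  | refl =>
    rintro ⟨u, u', s, t, heq, -⟩
    simp at heq
  | head hstep _ ih => exact fun h => ih (stuck_step h hstep)

theorem inl_head_step {s : S} {x' y : List (S ⊕ S)} (h : RevStep R (Sum.inl s :: x') y) :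
    ∃ y', y = Sum.inl s :: y' := by
  obtain ⟨u, u', s2, t2, v, v', hx, hy, -⟩ := h
  cases u with
  | nil => simp at hx
  | cons a u =>
    have ha : a = Sum.inl s := by
      have := congrArg (List.head? ·) hx; simpa using this.symm
    exact ⟨u ++ wpos v' ++ wneg v ++ u', by rw [hy, ha]; simp [List.append_assoc]⟩

theorem inl_head_not_nil : ∀ {x : List (S ⊕ S)}, Rev R x [] →
    (∃ (s : S) (x' : List (S ⊕ S)), x = Sum.inl s :: x') → False := by
  intro x hrev
  induction hrev using Relation.ReflTransGen.head_induction_on with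
  | refl => rintro ⟨s, x', h⟩; simp at h
  | head hstep _ ih =>
    rintro ⟨s, x', rfl⟩
    obtain ⟨y', rfl⟩ := inl_head_step hstep
    exact ih ⟨s, y', rfl⟩

def NoAdj (x : List (S ⊕ S)) : Prop :=
  ∀ (u u' : List (S ⊕ S)) (s t : S), x ≠ u ++ [Sum.inr s, Sum.inl t] ++ u'

theorem shape : ∀ (x : List (S ⊕ S)), NoAdj x → ∃ c d, x = wpos c ++ wneg d
  | [], _ => ⟨[], [], rfl⟩
  | Sum.inl s :: x, h => by
    obtain ⟨c, d, rfl⟩ := shape x (fun u u' s' t' he => h (Sum.inl s :: u) u' s' t' (by simp [he]))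
    exact ⟨s :: c, d, by simp [wpos]⟩
  | Sum.inr s :: x, h => by
    obtain ⟨c, d, hx⟩ := shape x (fun u u' s' t' he => h (Sum.inr s :: u) u' s' t' (by simp [he]))
    cases c with
    | nil =>
      refine ⟨[], d ++ [s], ?_⟩
      rw [hx]; simp [wpos, wneg_append, wneg]
    | cons t c =>
      exfalso
      exact h [] (wpos c ++ wneg d) s t (by rw [hx]; simp [wpos])

theorem normal_ctx_shape {z P Q : List (S ⊕ S)} (hn : NormalW R z)
    (hrev : Rev R (P ++ z ++ Q) []) : NoAdj z := by
  intro u u' s t he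
  by_cases hr : ∃ v v', (R (s :: v') (t :: v) ∨ R (t :: v) (s :: v') ∨ (s = t ∧ v = [] ∧ v' = []))
  · obtain ⟨v, v', hvv⟩ := hr
    exact hn _ ⟨u, u', s, t, v, v', he, rfl, hvv⟩
  · refine stuck_not_nil hrev ⟨P ++ u, u' ++ Q, s, t, ?_, ?_⟩
    · rw [he]; simp [List.append_assoc]
    · exact fun v v' hvv => hr ⟨v, v', hvv⟩

end Stmt6

open Stmt6 in
/-- In a complete complemented presentation, any two elements of the presented
monoid admitting a common right-multiple admit a least common right-multiple. -/
theorem stmt6 {S : Type} (R : List S → List S → Prop) (hc : Complete R)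
    (hcompl : Complemented R) (w w' : List S)
    (hcm : ∃ m x y : List S, REquiv R m (w ++ x) ∧ REquiv R m (w' ++ y)) :
    ∃ z : List S,
      (∃ x y : List S, REquiv R z (w ++ x) ∧ REquiv R z (w' ++ y)) ∧
      ∀ m : List S,
        (∃ x y : List S, REquiv R m (w ++ x) ∧ REquiv R m (w' ++ y)) →
        ∃ t : List S, REquiv R m (z ++ t) := by
  classical
  obtain ⟨m0, x0, y0, hm1, hm2⟩ := hcm
  have hww : REquiv R (w ++ x0) (w' ++ y0) := requiv_trans (requiv_symm hm1) hm2
  have hrevB : Rev R (wneg x0 ++ (wneg w ++ wpos w') ++ wpos y0) [] := by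
    have h := hc _ _ hww
    rwa [show wneg (w ++ x0) ++ wpos (w' ++ y0)
        = wneg x0 ++ (wneg w ++ wpos w') ++ wpos y0 by
      simp [wneg_append, wpos_append, List.append_assoc]] at h
  obtain ⟨nB, hnB⟩ := rev_to_stepsN hrevB
  have hbound : ∀ k c, StepsN R k (wneg w ++ wpos w') c → k ≤ nB := by
    intro k c hk
    exact (stepB hcompl (stepsN_lift (wneg x0) (wpos y0) hk) hnB normal_nil).1
  obtain ⟨M, hrevM, hnfM⟩ := exists_nf nB _ hbound
  have hM0 : Rev R (wneg x0 ++ M ++ wpos y0) [] :=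
    rev_to_nf hcompl hrevB normal_nil (rev_lift (wneg x0) (wpos y0) hrevM)
  obtain ⟨c, d, rfl⟩ := shape M (normal_ctx_shape hnfM hM0)
  have hVM : V R (wneg w ++ wpos w') w w' := by
    refine V_append (R := R) (wneg w) (c := []) ?_ ?_
    · simpa using V_wneg (R := R) w []
    · simpa using V_wpos (R := R) w' []
  have hVcd := V_rev hrevM hVM
  obtain ⟨e, hVc, hVd⟩ := V_append_elim (R := R) (wpos c) hVcd
  have hcz : REquiv R (w ++ c) (w' ++ d) :=
    requiv_trans (V_wpos_elim c hVc) (V_wneg_elim d hVd)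
  refine ⟨w ++ c, ⟨c, d, requiv_refl _, hcz⟩, ?_⟩
  rintro m ⟨x, y, hx, hy⟩
  have hww2 : REquiv R (w ++ x) (w' ++ y) := requiv_trans (requiv_symm hx) hy
  have hrevB2 : Rev R (wneg x ++ (wneg w ++ wpos w') ++ wpos y) [] := by
    have h := hc _ _ hww2
    rwa [show wneg (w ++ x) ++ wpos (w' ++ y)
        = wneg x ++ (wneg w ++ wpos w') ++ wpos y by
      simp [wneg_append, wpos_append, List.append_assoc]] at h
  have hrevB' : Rev R ((wneg x ++ wpos c) ++ (wneg d ++ wpos y)) [] := by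
    have h := rev_to_nf hcompl hrevB2 normal_nil (rev_lift (wneg x) (wpos y) hrevM)
    rwa [show wneg x ++ (wpos c ++ wneg d) ++ wpos y
        = (wneg x ++ wpos c) ++ (wneg d ++ wpos y) by simp [List.append_assoc]] at h
  obtain ⟨n2, hn2⟩ := rev_to_stepsN hrevB'
  have hbound2 : ∀ k cc, StepsN R k (wneg x ++ wpos c) cc → k ≤ n2 := by
    intro k cc hk
    have h := stepsN_lift [] (wneg d ++ wpos y) hk
    simp only [List.nil_append] at h
    exact (stepB hcompl h hn2 normal_nil).1
  obtain ⟨N1, hrevN1, hnfN1⟩ := exists_nf n2 _ hbound2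
  have hliftN1 : Rev R ((wneg x ++ wpos c) ++ (wneg d ++ wpos y)) (N1 ++ (wneg d ++ wpos y)) := by
    have h := rev_lift [] (wneg d ++ wpos y) hrevN1
    simpa only [List.nil_append] using h
  have hN1nil : Rev R (N1 ++ (wneg d ++ wpos y)) [] :=
    rev_to_nf hcompl hrevB' normal_nil hliftN1
  have hN1adj : NoAdj N1 := by
    refine normal_ctx_shape (P := []) (Q := wneg d ++ wpos y) hnfN1 ?_
    simpa only [List.nil_append] using hN1nil
  obtain ⟨e1, f, rfl⟩ := shape N1 hN1adj
  cases e1 with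
  | cons s e1' =>
    exfalso
    refine inl_head_not_nil hN1nil ⟨s, wpos e1' ++ wneg f ++ (wneg d ++ wpos y), ?_⟩
    simp [wpos, List.append_assoc]
  | nil =>
    have hVxc : V R (wneg x ++ wpos c) x c := by
      refine V_append (R := R) (wneg x) (c := []) ?_ ?_
      · simpa using V_wneg (R := R) x []
      · simpa using V_wpos (R := R) c []
    have hVf := V_rev hrevN1 hVxc
    have hxcf : REquiv R x (c ++ f) := V_wneg_elim f (by simpa [wpos] using hVf)
    refine ⟨f, requiv_trans hx ?_⟩
    rw [List.append_assoc]
    exact requiv_append (requiv_refl w) hxcf
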